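/- arXiv:math/0411596 — 4 statements merged into one kernel-verified Lean document; each statement's English description precedes it below -/
import Mathlib

section
/- For nonzero vectors ρ, ρ̄ in ℝ^d with nonnegative entries, define their normalized versions π = ρ/|ρ| and π̄ = ρ̄/|ρ̄| where |x| = Σᵢ|xᵢ|, and define |ρ ∧ ρ̄| = (1/2)Σ_{i,j} |ρᵢρ̄ⱼ - ρ̄ᵢρⱼ|. Then |ρ ∧ ρ̄|/(|ρ||ρ̄|) ≤ |π - π̄| ≤ 2|ρ ∧ ρ̄|/(|ρ||ρ̄|). -/
/-!
After normalizing, `π` and `π̄` are probability vectors, and the wedge of `ρ, ρ̄` divided by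
`|ρ||ρ̄|` is the wedge of `π, π̄`. Since `∑ⱼ π̄ⱼ = ∑ⱼ πⱼ = 1`, one has
`πᵢ - π̄ᵢ = ∑ⱼ (πᵢ π̄ⱼ - π̄ᵢ πⱼ)`, which bounds `|π - π̄|` by twice the wedge. Conversely
`πᵢ π̄ⱼ - π̄ᵢ πⱼ = πᵢ (π̄ⱼ - πⱼ) + (πᵢ - π̄ᵢ) πⱼ`, and summing absolute values bounds twice the
wedge by `2 |π - π̄|`.
-/

open Finset

section Wedge

variable {ι : Type*} [Fintype ι]

theorem sum_abs_sub_le_sum_sum_abs_wedge {p q : ι → ℝ} (hp : ∑ i, p i = 1)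
    (hq : ∑ i, q i = 1) :
    ∑ i, |p i - q i| ≤ ∑ i, ∑ j, |p i * q j - q i * p j| := by
  refine sum_le_sum fun i _ => ?_
  have hexpand : p i - q i = ∑ j, (p i * q j - q i * p j) := by
    rw [sum_sub_distrib, ← mul_sum, ← mul_sum, hp, hq, mul_one, mul_one]
  rw [hexpand]
  exact abs_sum_le_sum_abs _ _

theorem sum_sum_abs_wedge_le_two_mul {p q : ι → ℝ} (hp₀ : ∀ i, 0 ≤ p i)
    (hp : ∑ i, p i = 1) :
    ∑ i, ∑ j, |p i * q j - q i * p j| ≤ 2 * ∑ i, |p i - q i| := by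
  have hterm : ∀ i j, |p i * q j - q i * p j| ≤ p i * |p j - q j| + |p i - q i| * p j := by
    intro i j
    calc |p i * q j - q i * p j| = |p i * (q j - p j) + (p i - q i) * p j| := by ring_nf
      _ ≤ |p i * (q j - p j)| + |(p i - q i) * p j| := abs_add_le _ _
      _ = p i * |p j - q j| + |p i - q i| * p j := by
        rw [abs_mul, abs_mul, abs_of_nonneg (hp₀ i), abs_of_nonneg (hp₀ j), abs_sub_comm]
  calc ∑ i, ∑ j, |p i * q j - q i * p j|
      ≤ ∑ i, ∑ j, (p i * |p j - q j| + |p i - q i| * p j) :=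
        sum_le_sum fun i _ => sum_le_sum fun j _ => hterm i j
    _ = 2 * ∑ i, |p i - q i| := by
        simp only [sum_add_distrib, ← mul_sum, ← sum_mul, hp]
        ring

theorem sum_sum_abs_wedge_div (x y : ι → ℝ) {a b : ℝ} (ha : 0 ≤ a) (hb : 0 ≤ b) :
    ∑ i, ∑ j, |x i / a * (y j / b) - y i / b * (x j / a)| =
      (∑ i, ∑ j, |x i * y j - y i * x j|) / (a * b) := by
  simp only [sum_div]
  refine sum_congr rfl fun i _ => sum_congr rfl fun j _ => ?_
  rw [← abs_of_nonneg (mul_nonneg ha hb), ← abs_div]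
  ring_nf

end Wedge

theorem sum_div_sum_abs_eq_one {ι : Type*} [Fintype ι] {x : ι → ℝ} (hx₀ : ∀ i, 0 ≤ x i)
    (hx : x ≠ 0) :
    ∑ i, x i / ∑ k, |x k| = 1 := by
  have hsum : ∑ k, |x k| = ∑ k, x k := sum_congr rfl fun k _ => abs_of_nonneg (hx₀ k)
  obtain ⟨i, hi⟩ := Function.ne_iff.mp hx
  have hpos : 0 < ∑ k, x k :=
    sum_pos' (fun k _ => hx₀ k) ⟨i, mem_univ i, lt_of_le_of_ne (hx₀ i) (Ne.symm hi)⟩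
  rw [← sum_div, hsum, div_self hpos.ne']

/-- For nonzero vectors `ρ, ρ̄` in `ℝ^d` with nonnegative entries, with
`π = ρ/|ρ|`, `π̄ = ρ̄/|ρ̄|` (ℓ¹ normalization) and
`|ρ ∧ ρ̄| = (1/2) ∑_{i,j} |ρᵢ ρ̄ⱼ - ρ̄ᵢ ρⱼ|`, one has
`|ρ ∧ ρ̄|/(|ρ||ρ̄|) ≤ |π - π̄| ≤ 2 |ρ ∧ ρ̄|/(|ρ||ρ̄|)`. -/
theorem stmt_0 (d : ℕ) (ρ ρbar : Fin d → ℝ)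
    (hρ : ∀ i, 0 ≤ ρ i) (hρbar : ∀ i, 0 ≤ ρbar i)
    (hρ0 : ρ ≠ 0) (hρbar0 : ρbar ≠ 0) :
    (∑ i, ∑ j, |ρ i * ρbar j - ρbar i * ρ j|) / 2 /
        ((∑ i, |ρ i|) * (∑ i, |ρbar i|)) ≤
      ∑ i, |ρ i / (∑ k, |ρ k|) - ρbar i / (∑ k, |ρbar k|)| ∧
    ∑ i, |ρ i / (∑ k, |ρ k|) - ρbar i / (∑ k, |ρbar k|)| ≤
      2 * ((∑ i, ∑ j, |ρ i * ρbar j - ρbar i * ρ j|) / 2 /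
        ((∑ i, |ρ i|) * (∑ i, |ρbar i|))) := by
  set π : Fin d → ℝ := fun i => ρ i / ∑ k, |ρ k|
  set πbar : Fin d → ℝ := fun i => ρbar i / ∑ k, |ρbar k|
  have hπ : ∑ i, π i = 1 := sum_div_sum_abs_eq_one hρ hρ0
  have hπbar : ∑ i, πbar i = 1 := sum_div_sum_abs_eq_one hρbar hρbar0
  have hπ₀ : ∀ i, 0 ≤ π i := fun i => div_nonneg (hρ i) (sum_nonneg fun k _ => abs_nonneg _)
  have hwedge : (∑ i, ∑ j, |ρ i * ρbar j - ρbar i * ρ j|) / 2 /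
      ((∑ i, |ρ i|) * (∑ i, |ρbar i|)) = (∑ i, ∑ j, |π i * πbar j - πbar i * π j|) / 2 := by
    rw [sum_sum_abs_wedge_div ρ ρbar (sum_nonneg fun k _ => abs_nonneg _)
      (sum_nonneg fun k _ => abs_nonneg _)]
    ring
  have hupper := sum_abs_sub_le_sum_sum_abs_wedge hπ hπbar
  have hlower := sum_sum_abs_wedge_le_two_mul (q := πbar) hπ₀ hπ
  rw [hwedge]
  constructor <;> linarith
end

section
/- Let h(x) = -x log x - (1-x) log(1-x) for x ∈ [0,1] and H(p,q) = h((1-p)q + p(1-q)). Then for all p, q ∈ [0,1], H(p,q) ≥ h(p), with equality at q = 0 and q = 1. -/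
/-- Binary entropy `h(x) = -x log x - (1-x) log(1-x)` (convention `0 log 0 = 0`). -/
noncomputable def binEnt (x : ℝ) : ℝ := -(x * Real.log x) - (1 - x) * Real.log (1 - x)

/-- `H(p,q) = h((1-p)q + p(1-q))`. -/
noncomputable def Hpq (p q : ℝ) : ℝ := binEnt ((1 - p) * q + p * (1 - q))

lemma binEnt_eq (x : ℝ) : binEnt x = Real.binEntropy x := by
  simp [binEnt, Real.binEntropy, Real.log_inv]; ring

/-- For all `p, q ∈ [0,1]`, `H(p,q) ≥ h(p)`, with equality at `q = 0` and `q = 1`. -/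
theorem stmt_2 (p q : ℝ) (hp : p ∈ Set.Icc (0:ℝ) 1) (hq : q ∈ Set.Icc (0:ℝ) 1) :
    binEnt p ≤ Hpq p q ∧ Hpq p 0 = binEnt p ∧ Hpq p 1 = binEnt p := by
  refine ⟨?_, by simp [Hpq], by simp [Hpq, binEnt_eq, Real.binEntropy_one_sub]⟩
  have hconc := Real.strictConcave_binEntropy.concaveOn
  obtain ⟨hp0, hp1⟩ := hp
  obtain ⟨hq0, hq1⟩ := hq
  have h1p : (1 : ℝ) - p ∈ Set.Icc (0:ℝ) 1 := ⟨by linarith, by linarith⟩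
  have := hconc.2 ⟨hp0, hp1⟩ h1p (by linarith : (0:ℝ) ≤ 1 - q) hq0 (by ring)
  rw [Hpq, binEnt_eq, binEnt_eq]
  calc Real.binEntropy p = (1 - q) * Real.binEntropy p + q * Real.binEntropy (1 - p) := by
        rw [Real.binEntropy_one_sub]; ring
    _ ≤ Real.binEntropy ((1 - q) • p + q • (1 - p)) := by simpa using this
    _ = Real.binEntropy ((1 - p) * q + p * (1 - q)) := by congr 1; simp [smul_eq_mul]; ring
end

section
/- Let h(x) = -x log x - (1-x) log(1-x) on [0,1] and H(p,q) = h((1-p)q + p(1-q)). Then for all p, q ∈ [0,1]: H(p,q) ≥ h(p) + 2(log 2 - h(p))·min(q, 1-q). -/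
lemma binEnt_concave {x y a b : ℝ} (hx : x ∈ Set.Icc (0:ℝ) 1) (hy : y ∈ Set.Icc (0:ℝ) 1)
    (ha : 0 ≤ a) (hb : 0 ≤ b) (hab : a + b = 1) :
    a * binEnt x + b * binEnt y ≤ binEnt (a * x + b * y) := by
  simp only [binEnt_eq]
  exact Real.strictConcave_binEntropy.concaveOn.2 hx hy ha hb hab

/-- For all `p, q ∈ [0,1]`: `H(p,q) ≥ h(p) + 2 (log 2 - h(p)) min(q, 1-q)`. -/
theorem stmt_4 (p q : ℝ) (hp : p ∈ Set.Icc (0:ℝ) 1) (hq : q ∈ Set.Icc (0:ℝ) 1) :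
    binEnt p + 2 * (Real.log 2 - binEnt p) * min q (1 - q) ≤ Hpq p q := by
  obtain ⟨hq0, hq1⟩ := hq
  have hhalf : (2⁻¹ : ℝ) ∈ Set.Icc (0:ℝ) 1 := by norm_num
  have hb2 : binEnt 2⁻¹ = Real.log 2 := by
    rw [binEnt_eq]; exact Real.binEntropy_two_inv
  rcases le_total q (1 - q) with h | h
  · rw [min_eq_left h]
    have hq2 : q ≤ 2⁻¹ := by linarith
    have := binEnt_concave hp hhalf (by linarith : (0:ℝ) ≤ 1 - 2*q)
      (by linarith : (0:ℝ) ≤ 2*q) (by ring)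
    rw [hb2] at this
    have harg : (1 - 2*q) * p + 2*q * 2⁻¹ = (1 - p) * q + p * (1 - q) := by ring
    rw [harg] at this
    unfold Hpq; linarith
  · rw [min_eq_right h]
    have hq2 : (2⁻¹:ℝ) ≤ q := by linarith
    have h1p : (1 - p) ∈ Set.Icc (0:ℝ) 1 := by
      obtain ⟨h1, h2⟩ := hp; constructor <;> linarith
    have := binEnt_concave h1p hhalf (by linarith : (0:ℝ) ≤ 2*q - 1)
      (by linarith : (0:ℝ) ≤ 2 - 2*q) (by ring)
    rw [hb2] at this
    have hsym : binEnt (1 - p) = binEnt p := by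
      simp only [binEnt_eq]; exact Real.binEntropy_one_sub p
    rw [hsym] at this
    have harg : (2*q - 1) * (1 - p) + (2 - 2*q) * 2⁻¹ = (1 - p) * q + p * (1 - q) := by ring
    rw [harg] at this
    unfold Hpq; linarith
end

section
/- Under the setup where given X = a_i the observations Y_1, Y_2, ... are i.i.d. with density g_i, and J_j = {a_ℓ : D(g_j ‖ g_ℓ) = 0} where D denotes Kullback-Leibler divergence: the event {X ∈ J_j} is measurable with respect to σ(Y_1, Y_2, ...), and consequently E[(1{X ∈ J_j} - P(X ∈ J_j | Y_1,...,Y_m))²] → 0 as m → ∞. -/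
/-!
Fix `j` and let `F ℓ = log (g ℓ / g j)`. Given `X = i` the observations are i.i.d. with density
`g i`, so by the strong law the empirical means of `F ℓ (Y k)` converge a.s. to
`c i ℓ = ∫ g i * F ℓ dφ`. By Gibbs' inequality `c i = c j` exactly when `D(g j‖g i) = 0`: for
`ℓ = i` the two means are `D(g i‖g j) ≥ 0` and `-D(g j‖g i) ≤ 0`. Hence the `σ(Y)`-measurable
event that all empirical means converge to `c j` agrees with `{X ∈ J_j}` up to a null set, and
Lévy's upward theorem with dominated convergence gives the `L²` convergence of
`P(X ∈ J_j | Y_1, …, Y_m)`.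
-/

open MeasureTheory ProbabilityTheory Filter Finset Topology InformationTheory

section Gibbs

lemma mul_log_div_add_sub_eq_mul_klFun {p q : ℝ} (hpq : q = 0 → p = 0) :
    p * Real.log (p / q) + (q - p) = q * klFun (p / q) := by
  rcases eq_or_ne q 0 with rfl | hq
  · simp [hpq rfl]
  · rw [klFun_apply]
    field_simp
    ring

lemma mul_klFun_div_nonneg {p q : ℝ} (hp : 0 ≤ p) (hq : 0 ≤ q) : 0 ≤ q * klFun (p / q) :=
  mul_nonneg hq (klFun_nonneg (div_nonneg hp hq))

variable {α : Type*} [MeasurableSpace α] {φ : Measure α} {p q : α → ℝ}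

lemma integral_mul_log_div_eq_integral_mul_klFun (hp1 : ∫ u, p u ∂φ = 1)
    (hq1 : ∫ u, q u ∂φ = 1) (hpq : ∀ u, q u = 0 → p u = 0)
    (hint : Integrable (fun u => p u * Real.log (p u / q u)) φ) :
    Integrable (fun u => q u * klFun (p u / q u)) φ ∧
      ∫ u, p u * Real.log (p u / q u) ∂φ = ∫ u, q u * klFun (p u / q u) ∂φ := by
  have hp : Integrable p φ := .of_integral_ne_zero (by simp [hp1])
  have hq : Integrable q φ := .of_integral_ne_zero (by simp [hq1])
  have hqp : Integrable (fun u => q u - p u) φ := hq.sub hp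
  have hsum : (fun u => q u * klFun (p u / q u)) =
      fun u => p u * Real.log (p u / q u) + (q u - p u) :=
    funext fun u => (mul_log_div_add_sub_eq_mul_klFun (hpq u)).symm
  refine ⟨hsum ▸ hint.add hqp, ?_⟩
  rw [hsum, integral_add hint hqp, integral_sub hq hp, hp1, hq1, sub_self, add_zero]

theorem integral_mul_log_div_nonneg (hp0 : ∀ u, 0 ≤ p u) (hq0 : ∀ u, 0 ≤ q u)
    (hp1 : ∫ u, p u ∂φ = 1) (hq1 : ∫ u, q u ∂φ = 1) (hpq : ∀ u, q u = 0 → p u = 0)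
    (hint : Integrable (fun u => p u * Real.log (p u / q u)) φ) :
    0 ≤ ∫ u, p u * Real.log (p u / q u) ∂φ := by
  rw [(integral_mul_log_div_eq_integral_mul_klFun hp1 hq1 hpq hint).2]
  exact integral_nonneg fun u => mul_klFun_div_nonneg (hp0 u) (hq0 u)

theorem ae_eq_of_integral_mul_log_div_eq_zero (hp0 : ∀ u, 0 ≤ p u) (hq0 : ∀ u, 0 ≤ q u)
    (hp1 : ∫ u, p u ∂φ = 1) (hq1 : ∫ u, q u ∂φ = 1) (hpq : ∀ u, q u = 0 → p u = 0)
    (hint : Integrable (fun u => p u * Real.log (p u / q u)) φ)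
    (hD : ∫ u, p u * Real.log (p u / q u) ∂φ = 0) : p =ᵐ[φ] q := by
  obtain ⟨hint', heq⟩ := integral_mul_log_div_eq_integral_mul_klFun hp1 hq1 hpq hint
  rw [heq, integral_eq_zero_iff_of_nonneg (fun u => mul_klFun_div_nonneg (hp0 u) (hq0 u))
    hint'] at hD
  filter_upwards [hD] with u hu
  rcases (mul_eq_zero.1 hu) with hq | hkl
  · rw [hq, hpq u hq]
  · have hq : q u ≠ 0 := by rintro h; simp [h, klFun_zero] at hkl
    rw [klFun_eq_zero_iff (div_nonneg (hp0 u) (hq0 u)), div_eq_one_iff_eq hq] at hkl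
    exact hkl

end Gibbs

section LogLikelihood

lemma mul_log_div_eq_sub {a b c : ℝ} (hb : b = 0 → a = 0) (hc : c = 0 → a = 0) :
    a * Real.log (b / c) = a * Real.log (a / c) - a * Real.log (a / b) := by
  rcases eq_or_ne a 0 with rfl | ha
  · simp
  have hb : b ≠ 0 := mt hb ha
  have hc : c ≠ 0 := mt hc ha
  rw [Real.log_div hb hc, Real.log_div ha hc, Real.log_div ha hb]
  ring

variable {ι α : Type*} [MeasurableSpace α] {φ : Measure α} {g : ι → α → ℝ}

lemma integrable_mul_log_div (hsupp : ∀ i j u, g i u = 0 ↔ g j u = 0)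
    (hint : ∀ i j, Integrable (fun u => g i u * Real.log (g i u / g j u)) φ) (i j ℓ : ι) :
    Integrable (fun u => g i u * Real.log (g ℓ u / g j u)) φ := by
  have hsub : (fun u => g i u * Real.log (g ℓ u / g j u)) =
      fun u => g i u * Real.log (g i u / g j u) - g i u * Real.log (g i u / g ℓ u) :=
    funext fun u => mul_log_div_eq_sub (hsupp i ℓ u).2 (hsupp i j u).2
  exact hsub ▸ (hint i j).sub (hint i ℓ)

theorem forall_integral_mul_log_div_eq_iff (hg0 : ∀ i u, 0 ≤ g i u)
    (hg1 : ∀ i, ∫ u, g i u ∂φ = 1) (hsupp : ∀ i j u, g i u = 0 ↔ g j u = 0)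
    (hint : ∀ i j, Integrable (fun u => g i u * Real.log (g i u / g j u)) φ) (i j : ι) :
    (∀ ℓ, ∫ u, g i u * Real.log (g ℓ u / g j u) ∂φ =
        ∫ u, g j u * Real.log (g ℓ u / g j u) ∂φ) ↔
      ∫ u, g j u * Real.log (g j u / g i u) ∂φ = 0 := by
  have hD (a b : ι) : 0 ≤ ∫ u, g a u * Real.log (g a u / g b u) ∂φ :=
    integral_mul_log_div_nonneg (hg0 a) (hg0 b) (hg1 a) (hg1 b) (fun u => (hsupp a b u).2)
      (hint a b)
  constructor
  · intro h
    have hrev : ∫ u, g j u * Real.log (g i u / g j u) ∂φ =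
        -∫ u, g j u * Real.log (g j u / g i u) ∂φ := by
      rw [← integral_neg]
      congr with u
      rw [← inv_div (g j u) (g i u), Real.log_inv, mul_neg]
    linarith [h i, hD i j, hD j i]
  · intro h ℓ
    have hji : g j =ᵐ[φ] g i := ae_eq_of_integral_mul_log_div_eq_zero (hg0 j) (hg0 i) (hg1 j)
      (hg1 i) (fun u => (hsupp j i u).2) (hint j i) h
    refine integral_congr_ae ?_
    filter_upwards [hji] with u hu
    rw [hu]

end LogLikelihood

section IID

variable {Ω β : Type*} [MeasurableSpace Ω] [MeasurableSpace β]

def HasIIDLaw (Y : ℕ → Ω → β) (ν : Measure β) (Q : Measure Ω) : Prop :=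
  ∀ (r : ℕ) (B : ℕ → Set β), (∀ k, MeasurableSet (B k)) →
    Q (⋂ k ∈ range r, Y k ⁻¹' B k) = ∏ k ∈ range r, ν (B k)

namespace HasIIDLaw

variable {Y : ℕ → Ω → β} {ν : Measure β} {Q : Measure Ω}

lemma measure_biInter_preimage [IsProbabilityMeasure ν] (h : HasIIDLaw Y ν Q) (S : Finset ℕ)
    {B : ℕ → Set β} (hB : ∀ k ∈ S, MeasurableSet (B k)) :
    Q (⋂ k ∈ S, Y k ⁻¹' B k) = ∏ k ∈ S, ν (B k) := by
  classical
  have hS : S ⊆ range (S.sup id + 1) := fun k hk =>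
    mem_range.2 (Nat.lt_succ_of_le (le_sup (f := id) hk))
  have hcyl := h (S.sup id + 1) (fun k => if k ∈ S then B k else Set.univ) fun k => by
    by_cases hk : k ∈ S <;> simp [hk, hB]
  convert hcyl using 1
  · congr 1
    ext ω
    simp only [Set.mem_iInter, Set.mem_preimage]
    refine ⟨fun hω k _ => ?_, fun hω k hk => by simpa [hk] using hω k (hS hk)⟩
    split_ifs with hk
    exacts [hω k hk, Set.mem_univ _]
  · simp_rw [apply_ite ν, measure_univ]
    rw [prod_ite_mem, inter_eq_right.2 hS]

lemma map_eq [IsProbabilityMeasure ν] (h : HasIIDLaw Y ν Q) (hY : ∀ k, Measurable (Y k))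
    (k : ℕ) : Q.map (Y k) = ν := by
  ext s hs
  rw [Measure.map_apply (hY k) hs]
  simpa using h.measure_biInter_preimage {k} (B := fun _ => s) (by simp [hs])

lemma iIndepFun [IsProbabilityMeasure ν] (h : HasIIDLaw Y ν Q) (hY : ∀ k, Measurable (Y k)) :
    iIndepFun Y Q := by
  refine iIndepFun_iff_measure_inter_preimage_eq_mul.2 fun S sets hsets => ?_
  rw [h.measure_biInter_preimage S hsets]
  refine prod_congr rfl fun k hk => ?_
  rw [← Measure.map_apply (hY k) (hsets k hk), h.map_eq hY]

theorem ae_tendsto_average [IsProbabilityMeasure ν] (h : HasIIDLaw Y ν Q)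
    (hY : ∀ k, Measurable (Y k)) {F : β → ℝ} (hF : Measurable F) (hint : Integrable F ν) :
    ∀ᵐ ω ∂Q, Tendsto (fun n : ℕ => (∑ k ∈ range n, F (Y k ω)) / n) atTop
      (𝓝 (∫ b, F b ∂ν)) := by
  have hident (k : ℕ) : IdentDistrib (Y k) (Y 0) Q Q :=
    ⟨(hY k).aemeasurable, (hY 0).aemeasurable, by rw [h.map_eq hY, h.map_eq hY]⟩
  have hint0 : Integrable (fun ω => F (Y 0 ω)) Q := by
    rw [← h.map_eq hY 0] at hint
    exact hint.comp_measurable (hY 0)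
  have hmean : ∫ ω, F (Y 0 ω) ∂Q = ∫ b, F b ∂ν := by
    rw [← h.map_eq hY 0, integral_map (hY 0).aemeasurable hF.aestronglyMeasurable]
  simpa [hmean] using strong_law_ae_real (fun k ω => F (Y k ω)) hint0
    (fun k l hkl => ((h.iIndepFun hY).indepFun hkl).comp hF hF) fun k => (hident k).comp hF

end HasIIDLaw

end IID

section Mixture

variable {Ω β ι : Type*} [MeasurableSpace Ω] [MeasurableSpace β]

lemma ae_imp_of_ae_cond {μ : Measure Ω} [IsFiniteMeasure μ] {s : Set Ω} (hs : MeasurableSet s)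
    {p : Ω → Prop} (h : ∀ᵐ ω ∂μ[|s], p ω) : ∀ᵐ ω ∂μ, ω ∈ s → p ω := by
  rw [ProbabilityTheory.cond,
    Measure.ae_ennreal_smul_measure_iff (ENNReal.inv_ne_zero.2 (measure_ne_top μ s))] at h
  exact (ae_restrict_iff' hs).1 h

theorem ae_tendsto_average_of_hasIIDLaw_cond [Countable ι] [MeasurableSpace ι]
    [MeasurableSingletonClass ι] {P : Measure Ω} [IsFiniteMeasure P] {X : Ω → ι}
    (hX : Measurable X) {Y : ℕ → Ω → β} (hY : ∀ k, Measurable (Y k)) {ν : ι → Measure β}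
    [∀ i, IsProbabilityMeasure (ν i)]
    (hlaw : ∀ i, P (X ⁻¹' {i}) ≠ 0 → HasIIDLaw Y (ν i) P[|X ⁻¹' {i}])
    {F : β → ℝ} (hF : Measurable F) (hint : ∀ i, Integrable F (ν i)) :
    ∀ᵐ ω ∂P, Tendsto (fun n : ℕ => (∑ k ∈ range n, F (Y k ω)) / n) atTop
      (𝓝 (∫ b, F b ∂ν (X ω))) := by
  have hfiber (i : ι) : ∀ᵐ ω ∂P, X ω = i →
      Tendsto (fun n : ℕ => (∑ k ∈ range n, F (Y k ω)) / n) atTop (𝓝 (∫ b, F b ∂ν i)) := by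
    by_cases hi : P (X ⁻¹' {i}) = 0
    · filter_upwards [measure_eq_zero_iff_ae_notMem.1 hi] with ω hω hXω
      exact absurd hXω hω
    · exact ae_imp_of_ae_cond (hX (measurableSet_singleton i))
        ((hlaw i hi).ae_tendsto_average hY hF (hint i))
  filter_upwards [ae_all_iff.2 hfiber] with ω hω
  exact hω _ rfl

end Mixture

lemma measurableSet_forall_tendsto_average {Ω β ι : Type*} [Countable ι] [mβ : MeasurableSpace β]
    {Y : ℕ → Ω → β} {F : ι → β → ℝ} (hF : ∀ ℓ, Measurable (F ℓ)) (c : ι → ℝ) :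
    MeasurableSet[⨆ k, MeasurableSpace.comap (Y k) mβ]
      {ω | ∀ ℓ, Tendsto (fun n : ℕ => (∑ k ∈ range n, F ℓ (Y k ω)) / n) atTop (𝓝 (c ℓ))} := by
  have hYk (k : ℕ) : Measurable[⨆ k, MeasurableSpace.comap (Y k) mβ] (Y k) :=
    measurable_iff_comap_le.2 (le_iSup (fun k => MeasurableSpace.comap (Y k) mβ) k)
  rw [Set.ofPred_forall]
  refine .iInter fun ℓ => measurableSet_tendsto _ fun n => ?_
  exact (Finset.measurable_sum _ fun k _ => (hF ℓ).comp (hYk k)).div_const _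

section Levy

variable {Ω β : Type*} {m0 : MeasurableSpace Ω} [mβ : MeasurableSpace β]

def Filtration.generatedByFirst (Y : ℕ → Ω → β) (hY : ∀ k, Measurable (Y k)) :
    Filtration ℕ m0 where
  seq m := ⨆ k ∈ range m, MeasurableSpace.comap (Y k) mβ
  mono' _ _ hmn := biSup_mono fun _ hk => range_subset_range.2 hmn hk
  le' _ := iSup₂_le fun k _ => (hY k).comap_le

lemma Filtration.iSup_generatedByFirst (Y : ℕ → Ω → β) (hY : ∀ k, Measurable (Y k)) :
    ⨆ m, Filtration.generatedByFirst Y hY m = ⨆ k, MeasurableSpace.comap (Y k) mβ :=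
  le_antisymm
    (iSup_le fun _ => iSup₂_le fun k _ => le_iSup (fun k => MeasurableSpace.comap (Y k) mβ) k)
    (iSup_le fun k => (le_biSup (fun k => MeasurableSpace.comap (Y k) mβ)
      (self_mem_range_succ k)).trans
        (le_iSup (fun m => Filtration.generatedByFirst Y hY m) (k + 1)))

lemma sq_sub_le_four {a b : ℝ} (ha : |a| ≤ 1) (hb : |b| ≤ 1) : (a - b) ^ 2 ≤ 4 := by
  nlinarith [abs_le.1 ha, abs_le.1 hb]

theorem tendsto_integral_sq_indicator_sub_condExp {P : Measure Ω} [IsFiniteMeasure P]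
    {ℱ : Filtration ℕ m0} {A E : Set Ω} (hE : MeasurableSet E) (hA : MeasurableSet[⨆ n, ℱ n] A)
    (hAE : A =ᵐ[P] E) :
    Tendsto (fun n => ∫ ω, (E.indicator (fun _ => (1 : ℝ)) ω -
      P[E.indicator (fun _ => (1 : ℝ)) | ℱ n] ω) ^ 2 ∂P) atTop (𝓝 0) := by
  set f := E.indicator fun _ => (1 : ℝ)
  have hf_le (ω : Ω) : |f ω| ≤ 1 := by by_cases hω : ω ∈ E <;> simp [f, hω]
  have hcond_le (n : ℕ) : ∀ᵐ ω ∂P, |P[f | ℱ n] ω| ≤ 1 :=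
    ae_bdd_abs_condExp_of_ae_bdd_abs (ae_of_all _ hf_le)
  have hfA : f =ᵐ[P] A.indicator fun _ => 1 := indicator_ae_eq_of_ae_eq_set hAE.symm
  have hlevy : ∀ᵐ ω ∂P, Tendsto (fun n => P[f | ℱ n] ω) atTop (𝓝 (f ω)) := by
    have hle : ⨆ n, ℱ n ≤ m0 := iSup_le ℱ.le
    filter_upwards [((integrable_const 1).indicator (hle _ hA)).tendsto_ae_condExp
      (stronglyMeasurable_const.indicator hA), hfA,
      ae_all_iff.2 fun n => condExp_congr_ae (m := ℱ n) hfA] with ω hω hfω hn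
    rw [hfω]
    exact hω.congr fun n => (hn n).symm
  have hdom := tendsto_integral_of_dominated_convergence
    (F := fun n ω => (f ω - P[f | ℱ n] ω) ^ 2) (f := fun _ => 0) (fun _ => (4 : ℝ))
    (fun n => ((stronglyMeasurable_const.indicator hE).aestronglyMeasurable.sub
      (stronglyMeasurable_condExp.mono (ℱ.le n)).aestronglyMeasurable).pow 2)
    (integrable_const 4)
    (fun n => by
      filter_upwards [hcond_le n] with ω hω
      rw [Real.norm_eq_abs, abs_of_nonneg (sq_nonneg _)]
      exact sq_sub_le_four (hf_le ω) hω)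
    (by filter_upwards [hlevy] with ω hω using
      by simpa using ((tendsto_const_nhds (x := f ω)).sub hω).pow 2)
  simpa using hdom

end Levy

section DensityMeasure

variable {α : Type*} [MeasurableSpace α] {φ : Measure α} {p : α → ℝ}

lemma withDensity_ofReal_apply (hp : Integrable p φ) (hp0 : ∀ u, 0 ≤ p u) {B : Set α}
    (hB : MeasurableSet B) :
    φ.withDensity (fun u => ENNReal.ofReal (p u)) B = ENNReal.ofReal (∫ u in B, p u ∂φ) := by
  rw [withDensity_apply _ hB,
    ofReal_integral_eq_lintegral_ofReal hp.integrableOn (ae_of_all _ hp0)]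

lemma isProbabilityMeasure_withDensity_ofReal (hp0 : ∀ u, 0 ≤ p u) (hp1 : ∫ u, p u ∂φ = 1) :
    IsProbabilityMeasure (φ.withDensity fun u => ENNReal.ofReal (p u)) := by
  constructor
  rw [withDensity_ofReal_apply (.of_integral_ne_zero (by simp [hp1])) hp0 .univ,
    Measure.restrict_univ, hp1, ENNReal.ofReal_one]

lemma integrable_withDensity_ofReal_iff (hpm : Measurable p) (hp0 : ∀ u, 0 ≤ p u)
    {F : α → ℝ} :
    Integrable F (φ.withDensity fun u => ENNReal.ofReal (p u)) ↔
      Integrable (fun u => p u * F u) φ := by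
  rw [integrable_withDensity_iff hpm.ennreal_ofReal (ae_of_all _ fun _ => ENNReal.ofReal_lt_top)]
  simp_rw [ENNReal.toReal_ofReal (hp0 _), mul_comm (F _)]

lemma integral_withDensity_ofReal (hpm : Measurable p) (hp0 : ∀ u, 0 ≤ p u) (F : α → ℝ) :
    ∫ u, F u ∂φ.withDensity (fun u => ENNReal.ofReal (p u)) = ∫ u, p u * F u ∂φ := by
  rw [integral_withDensity_eq_integral_toReal_smul hpm.ennreal_ofReal
    (ae_of_all _ fun _ => ENNReal.ofReal_lt_top)]
  simp_rw [ENNReal.toReal_ofReal (hp0 _), smul_eq_mul]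

end DensityMeasure

theorem hasIIDLaw_cond_of_cylinder {Ω β ι : Type*} [MeasurableSpace Ω] [MeasurableSpace β]
    [MeasurableSpace ι] [MeasurableSingletonClass ι] {P : Measure Ω} [IsFiniteMeasure P]
    {X : Ω → ι} (hX : Measurable X) {Y : ℕ → Ω → β} {φ : Measure β} {g : ι → β → ℝ}
    (hg0 : ∀ i u, 0 ≤ g i u) (hgint : ∀ i, Integrable (g i) φ) {w : ι → ℝ}
    (hlaw : ∀ (i : ι) (r : ℕ) (B : Fin r → Set β), (∀ k, MeasurableSet (B k)) →
      P ({ω | X ω = i} ∩ ⋂ k : Fin r, Y k ⁻¹' B k) =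
        ENNReal.ofReal (w i * ∏ k, ∫ u in B k, g i u ∂φ))
    (i : ι) (hi : P {ω | X ω = i} ≠ 0) :
    HasIIDLaw Y (φ.withDensity fun u => ENNReal.ofReal (g i u)) P[|{ω | X ω = i}] := by
  intro r B hB
  have hPi : P {ω | X ω = i} = ENNReal.ofReal (w i) := by
    simpa using hlaw i 0 Fin.elim0 fun k => k.elim0
  have hint_nonneg (k : ℕ) : 0 ≤ ∫ u in B k, g i u ∂φ :=
    setIntegral_nonneg (hB k) fun u _ => hg0 i u
  have hfin : ⋂ k ∈ range r, Y k ⁻¹' B k = ⋂ k : Fin r, Y k ⁻¹' B k := by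
    ext ω
    simp [Fin.forall_iff]
  rw [cond_apply (s := {ω | X ω = i}) (hX (measurableSet_singleton i)), hfin,
    hlaw i r (fun k => B k) fun k => hB k,
    ENNReal.ofReal_mul' (prod_nonneg fun (k : Fin r) _ => hint_nonneg k), ← hPi,
    ENNReal.inv_mul_cancel_left hi (measure_ne_top _ _),
    Fin.prod_univ_eq_prod_range (fun k => ∫ u in B k, g i u ∂φ),
    ENNReal.ofReal_prod_of_nonneg fun k _ => hint_nonneg k]
  exact prod_congr rfl fun k _ => (withDensity_ofReal_apply (hgint i) (hg0 i) (hB k)).symm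

theorem stmt_13_general (Ω : Type*) [m0 : MeasurableSpace Ω] (P : Measure Ω)
    [IsProbabilityMeasure P] (d : ℕ)
    (X : Ω → Fin d) (hX : Measurable X)
    (Y : ℕ → Ω → ℝ) (hY : ∀ k, Measurable (Y k))
    (φ : Measure ℝ)
    (g : Fin d → ℝ → ℝ) (hgm : ∀ i, Measurable (g i)) (hg0 : ∀ i u, 0 ≤ g i u)
    (hg1 : ∀ i, ∫ u, g i u ∂φ = 1)
    (hsupp : ∀ i j u, g i u = 0 ↔ g j u = 0)
    (hint : ∀ i j, Integrable (fun u => g i u * Real.log (g i u / g j u)) φ)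
    (w : Fin d → ℝ)
    (hlaw : ∀ (i : Fin d) (r : ℕ) (B : Fin r → Set ℝ),
      (∀ k, MeasurableSet (B k)) →
      P ({ω | X ω = i} ∩ ⋂ k : Fin r, Y k ⁻¹' B k) =
        ENNReal.ofReal (w i * ∏ k, ∫ u in B k, g i u ∂φ))
    (j : Fin d)
    -- the event `{X ∈ J_j}` where `J_j = {ℓ : D(g_j‖g_ℓ) = 0}`
    (E : Set Ω)
    (hE : E = {ω | (∫ u, g j u * Real.log (g j u / g (X ω) u) ∂φ) = 0}) :
    (∃ A : Set Ω,
        MeasurableSet[⨆ k : ℕ, MeasurableSpace.comap (Y k)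
          (inferInstance : MeasurableSpace ℝ)] A ∧
        P (symmDiff A E) = 0) ∧
    Tendsto
      (fun m : ℕ => ∫ ω,
        (E.indicator (fun _ => (1 : ℝ)) ω -
          (P[E.indicator (fun _ => (1 : ℝ)) |
            ⨆ k ∈ Finset.range m, MeasurableSpace.comap (Y k)
              (inferInstance : MeasurableSpace ℝ)]) ω) ^ 2 ∂P)
      atTop (nhds 0) := by
  have hgint (i : Fin d) : Integrable (g i) φ := .of_integral_ne_zero (by simp [hg1 i])
  have (i : Fin d) : IsProbabilityMeasure (φ.withDensity fun u => ENNReal.ofReal (g i u)) :=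
    isProbabilityMeasure_withDensity_ofReal (hg0 i) (hg1 i)
  set F : Fin d → ℝ → ℝ := fun ℓ u => Real.log (g ℓ u / g j u)
  set c : Fin d → Fin d → ℝ := fun i ℓ => ∫ u, g i u * F ℓ u ∂φ
  have hF (ℓ : Fin d) : Measurable (F ℓ) := ((hgm ℓ).div (hgm j)).log
  have hslln : ∀ᵐ ω ∂P, ∀ ℓ, Tendsto (fun n : ℕ => (∑ k ∈ range n, F ℓ (Y k ω)) / n) atTop
      (𝓝 (c (X ω) ℓ)) := by
    refine ae_all_iff.2 fun ℓ => ?_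
    simpa [integral_withDensity_ofReal (hgm _) (hg0 _)] using
      ae_tendsto_average_of_hasIIDLaw_cond hX hY
        (hasIIDLaw_cond_of_cylinder hX hg0 hgint hlaw) (hF ℓ) fun i =>
        (integrable_withDensity_ofReal_iff (hgm i) (hg0 i)).2
          (integrable_mul_log_div hsupp hint i j ℓ)
  set A := {ω | ∀ ℓ, Tendsto (fun n : ℕ => (∑ k ∈ range n, F ℓ (Y k ω)) / n) atTop (𝓝 (c j ℓ))}
  have hAE : A =ᵐ[P] E := by
    refine eventuallyEq_set.2 ?_
    filter_upwards [hslln] with ω hω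
    simp only [A, hE, Set.mem_ofPred_eq]
    rw [← forall_integral_mul_log_div_eq_iff hg0 hg1 hsupp hint (X ω) j]
    refine ⟨fun h ℓ => tendsto_nhds_unique (hω ℓ) (h ℓ), fun h ℓ => ?_⟩
    convert hω ℓ using 2
    exact (h ℓ).symm
  have hEm : MeasurableSet E := by
    rw [hE]
    exact hX (.of_discrete (s := {i | ∫ u, g j u * Real.log (g j u / g i u) ∂φ = 0}))
  have hAm := measurableSet_forall_tendsto_average (Y := Y) hF (c j)
  refine ⟨⟨A, hAm, measure_symmDiff_eq_zero_iff.2 hAE⟩, ?_⟩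
  exact tendsto_integral_sq_indicator_sub_condExp (ℱ := Filtration.generatedByFirst Y hY) hEm
    (by rwa [Filtration.iSup_generatedByFirst]) hAE

/-- If, given `X = a_i`, the observations `Y_1, Y_2, …` are i.i.d. with density
`g_i`, and `J_j = {ℓ : D(g_j‖g_ℓ) = 0}`, then the event `{X ∈ J_j}` coincides,
up to a `P`-null set, with an event in `σ(Y_1, Y_2, …)`, and consequently
`E[(1{X ∈ J_j} - P(X ∈ J_j | Y_1,…,Y_m))²] → 0` as `m → ∞`. -/
theorem stmt_13 (Ω : Type*) [m0 : MeasurableSpace Ω] (P : Measure Ω)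
    [IsProbabilityMeasure P] (d : ℕ)
    (X : Ω → Fin d) (hX : Measurable X)
    (Y : ℕ → Ω → ℝ) (hY : ∀ k, Measurable (Y k))
    (φ : Measure ℝ) [SigmaFinite φ]
    (g : Fin d → ℝ → ℝ) (hgm : ∀ i, Measurable (g i)) (hg0 : ∀ i u, 0 ≤ g i u)
    (hg1 : ∀ i, ∫ u, g i u ∂φ = 1)
    (hsupp : ∀ i j u, g i u = 0 ↔ g j u = 0)
    (hint : ∀ i j, Integrable (fun u => g i u * Real.log (g i u / g j u)) φ)
    (w : Fin d → ℝ) (hw0 : ∀ i, 0 ≤ w i) (hw1 : ∑ i, w i = 1)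
    (hlaw : ∀ (i : Fin d) (r : ℕ) (B : Fin r → Set ℝ),
      (∀ k, MeasurableSet (B k)) →
      P ({ω | X ω = i} ∩ ⋂ k : Fin r, Y k ⁻¹' B k) =
        ENNReal.ofReal (w i * ∏ k, ∫ u in B k, g i u ∂φ))
    (j : Fin d)
    -- the event `{X ∈ J_j}` where `J_j = {ℓ : D(g_j‖g_ℓ) = 0}`
    (E : Set Ω)
    (hE : E = {ω | (∫ u, g j u * Real.log (g j u / g (X ω) u) ∂φ) = 0}) :
    (∃ A : Set Ω,
        MeasurableSet[⨆ k : ℕ, MeasurableSpace.comap (Y k)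
          (inferInstance : MeasurableSpace ℝ)] A ∧
        P (symmDiff A E) = 0) ∧
    Tendsto
      (fun m : ℕ => ∫ ω,
        (E.indicator (fun _ => (1 : ℝ)) ω -
          (P[E.indicator (fun _ => (1 : ℝ)) |
            ⨆ k ∈ Finset.range m, MeasurableSpace.comap (Y k)
              (inferInstance : MeasurableSpace ℝ)]) ω) ^ 2 ∂P)
      atTop (nhds 0) :=
  stmt_13_general Ω (m0 := m0) P d X hX Y hY φ g hgm hg0 hg1 hsupp hint w hlaw j E hE
end
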